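/- Let I be a finite set, β > 0, and let H, H' : I → ℝ be two energy functions inducing Boltzmann distributions q, p over subsets of I via q(U) ∝ exp(-β ∑_{r∈U} H(r)), p(U) ∝ exp(-β ∑_{r∈U} H'(r)). Then q = p as distributions on the power set of I if and only if H = H'. -/
import Mathlib


open Real Finset

/-- Two Boltzmann distributions over subsets of a finite set `I` with the same `β > 0`,
induced by energies `H` and `H'`, coincide as distributions on the power set of `I`
if and only if `H = H'`. -/
theorem boltzmann_subset_identifiable (I : Type*) [Fintype I]
    (H H' : I → ℝ) (β : ℝ) (hβ : 0 < β)
    (q p : Finset I → ℝ)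
    (hq : ∀ U, q U = Real.exp (-β * ∑ r ∈ U, H r) /
      ∑ U' : Finset I, Real.exp (-β * ∑ r ∈ U', H r))
    (hp : ∀ U, p U = Real.exp (-β * ∑ r ∈ U, H' r) /
      ∑ U' : Finset I, Real.exp (-β * ∑ r ∈ U', H' r)) :
    q = p ↔ H = H' := by
  set Z : ℝ := ∑ U' : Finset I, Real.exp (-β * ∑ r ∈ U', H r) with hZ
  set Z' : ℝ := ∑ U' : Finset I, Real.exp (-β * ∑ r ∈ U', H' r) with hZ'
  have hZpos : 0 < Z := Finset.sum_pos (fun U _ => Real.exp_pos _) ⟨∅, Finset.mem_univ _⟩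
  have hZ'pos : 0 < Z' := Finset.sum_pos (fun U _ => Real.exp_pos _) ⟨∅, Finset.mem_univ _⟩
  constructor
  · intro hqp
    -- from empty set: Z = Z'
    have h0 : q ∅ = p ∅ := by rw [hqp]
    rw [hq, hp] at h0
    simp only [Finset.sum_empty, mul_zero, Real.exp_zero] at h0
    have hZZ : Z = Z' := by
      field_simp at h0
      linarith
    funext r
    have h1 : q {r} = p {r} := by rw [hqp]
    rw [hq, hp] at h1
    simp only [Finset.sum_singleton] at h1
    rw [← hZZ] at h1
    have h2 : Real.exp (-β * H r) = Real.exp (-β * H' r) :=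
      (div_left_inj' (ne_of_gt hZpos)).mp h1
    have h3 : -β * H r = -β * H' r := Real.exp_injective h2
    exact mul_left_cancel₀ (by linarith : (-β : ℝ) ≠ 0) h3
  · rintro rfl
    funext U
    rw [hq, hp]
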